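/- Let H_B = U_B·Σ_B·V_Bᴴ and H_F = U_F·Σ_F·V_Fᴴ be singular value decompositions with singular values in descending order, where V_B, U_F ∈ ℂ^{N_S×N_S} are unitary. Then for the unitary choice Θ = V_B·U_Fᴴ, the singular values of the indirect channel factor exactly: σ_n(H_B·Θ·H_F) = σ_n(H_B)·σ_n(H_F) for every n ≥ 1. -/

import Mathlib

open Matrix

noncomputable def nthLargest {m : ℕ} (f : Fin m → ℝ) (n : ℕ) : ℝ :=
  if h : 1 ≤ n ∧ n ≤ m then (f ∘ Tuple.sort f) ⟨m - n, by omega⟩ else 0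

noncomputable def nthEig {m : ℕ} (Y : Matrix (Fin m) (Fin m) ℂ) (hY : Y.IsHermitian) (n : ℕ) : ℝ :=
  nthLargest hY.eigenvalues n

/-- The `n`-th largest singular value (1-based) of a complex matrix, equal to the square root
of the `n`-th largest eigenvalue of `A * Aᴴ`, with the convention that it is `0` whenever
`n` exceeds the matrix dimensions. -/
noncomputable def singVal {r c : ℕ} (A : Matrix (Fin r) (Fin c) ℂ) (n : ℕ) : ℝ :=
  Real.sqrt (nthLargest (Matrix.isHermitian_mul_conjTranspose_self A).eigenvalues n)

/-! The proof is a computation with the two decompositions: the inner unitaries cancel,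
`H_B Θ H_F = U_B (Σ_B Σ_F) V_Fᴴ`, and this is again a singular value decomposition, because a
product of rectangular diagonal matrices with nonnegative descending diagonals is one of the same
kind. The singular values of `U Σ Vᴴ` are read off from `(U Σ Vᴴ)(U Σ Vᴴ)ᴴ = U (Σ Σᴴ) Uᴴ`,
whose eigenvalues, counted with multiplicity, are the diagonal entries of `Σ Σᴴ`. -/

section Antitone

variable {M₀ : Type*} [Zero M₀] [Preorder M₀]

lemma Antitone.mul_of_nonneg [Mul M₀] [PosMulMono M₀] [MulPosMono M₀] {α : Type*} [Preorder α]
    {f g : α → M₀} (hf : Antitone f) (hg : Antitone g) (hf₀ : ∀ x, 0 ≤ f x)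
    (hg₀ : ∀ x, 0 ≤ g x) : Antitone (f * g) :=
  fun _ _ h ↦ mul_le_mul (hf h) (hg h) (hg₀ _) (hf₀ _)

lemma Antitone.ite_lt_of_nonneg {g : ℕ → M₀} (hg : Antitone g) (hg₀ : ∀ k, 0 ≤ g k) (s : ℕ) :
    Antitone fun k => if k < s then g k else 0 := by
  intro a b hab
  dsimp only
  split_ifs with hb ha ha
  · exact hg hab
  · omega
  · exact hg₀ a
  · exact le_rfl

end Antitone

open Polynomial in
theorem Matrix.IsHermitian.map_eigenvalues_eq_of_eq_conj_diagonal {𝕜 n : Type*} [RCLike 𝕜]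
    [Fintype n] [DecidableEq n] {A U : Matrix n n 𝕜} (hA : A.IsHermitian) (hU : Uᴴ * U = 1)
    {e : n → ℝ} (h : A = U * diagonal (fun i => (e i : 𝕜)) * Uᴴ) :
    Finset.univ.val.map hA.eigenvalues = Finset.univ.val.map e := by
  have hchar : A.charpoly = ∏ i, (X - C (e i : 𝕜)) := by
    rw [h, Matrix.mul_assoc, charpoly_mul_comm, Matrix.mul_assoc, hU, Matrix.mul_one,
      charpoly_diagonal]
  have hroots := hA.roots_charpoly_eq_eigenvalues
  rw [hchar, roots_prod _ _ (Finset.prod_ne_zero_iff.mpr fun i _ => X_sub_C_ne_zero _)] at hroots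
  refine Multiset.map_injective (RCLike.ofReal_injective (K := 𝕜)) ?_
  simpa [Multiset.map_map, Function.comp_def] using hroots.symm

section nthLargest

variable {m : ℕ} {f g : Fin m → ℝ}

theorem nthLargest_congr (h : Finset.univ.val.map f = Finset.univ.val.map g) :
    nthLargest f = nthLargest g := by
  have hsort : f ∘ Tuple.sort f = g ∘ Tuple.sort g :=
    List.ofFn_injective <| List.Perm.eq_of_sortedLE (Tuple.monotone_sort f).sortedLE_ofFn
      (Tuple.monotone_sort g).sortedLE_ofFn <| ((Tuple.sort f).ofFn_comp_perm f).trans <|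
        (Multiset.coe_eq_coe.mp (by simpa only [Fin.univ_val_map] using h)).trans
          ((Tuple.sort g).ofFn_comp_perm g).symm
  funext n
  simp only [nthLargest, hsort]

theorem nthLargest_eq_zero_of_le {n : ℕ} (hn : m ≤ n) : nthLargest f (n + 1) = 0 :=
  dif_neg (by omega)

theorem nthLargest_succ_of_antitone (hf : Antitone f) {n : ℕ} (hn : n < m) :
    nthLargest f (n + 1) = f ⟨n, hn⟩ := by
  have hsort : f ∘ Fin.revPerm = f ∘ Tuple.sort f :=
    Tuple.comp_sort_eq_comp_iff_monotone.mpr fun i j hij => hf (Fin.rev_le_rev.mpr hij)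
  rw [nthLargest, dif_pos ⟨by omega, hn⟩, ← hsort]
  simp only [Function.comp_apply, Fin.revPerm_apply]
  congr 1
  ext
  simp only [Fin.val_rev]
  omega

theorem nthLargest_succ_antitone (hf : ∀ i, 0 ≤ f i) :
    Antitone fun n => nthLargest f (n + 1) := by
  intro a b hab
  dsimp only
  by_cases hb : b < m
  · simp only [nthLargest, dif_pos (⟨by omega, hb⟩ : 1 ≤ b + 1 ∧ b + 1 ≤ m),
      dif_pos (⟨by omega, by omega⟩ : 1 ≤ a + 1 ∧ a + 1 ≤ m)]
    exact Tuple.monotone_sort f (Fin.mk_le_mk.mpr (by omega))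
  · rw [nthLargest_eq_zero_of_le (by omega), nthLargest]
    split
    · exact hf _
    · exact le_rfl

end nthLargest

section rectDiagonal

def rectDiagonal (r c : ℕ) (d : ℕ → ℝ) : Matrix (Fin r) (Fin c) ℂ :=
  of fun i j => if (i : ℕ) = j then (d i : ℂ) else 0

variable {r s t : ℕ}

theorem conjTranspose_rectDiagonal (d : ℕ → ℝ) :
    (rectDiagonal r s d)ᴴ = rectDiagonal s r d := by
  ext i j
  by_cases h : (i : ℕ) = j
  · simp [rectDiagonal, h]
  · simp [rectDiagonal, h, Ne.symm h]

theorem rectDiagonal_eq_diagonal (d : ℕ → ℝ) :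
    rectDiagonal r r d = diagonal fun i : Fin r => (d i : ℂ) := by
  ext i j
  simp [rectDiagonal, diagonal_apply, Fin.val_eq_val]

theorem rectDiagonal_mul_rectDiagonal (a b : ℕ → ℝ) :
    rectDiagonal r s a * rectDiagonal s t b =
      rectDiagonal r t fun k => if k < s then a k * b k else 0 := by
  ext i j
  simp only [rectDiagonal, mul_apply, of_apply]
  by_cases hi : (i : ℕ) < s
  · rw [Finset.sum_eq_single ⟨i, hi⟩]
    · by_cases hij : (i : ℕ) = j
      · simp [hij, show (j : ℕ) < s from hij ▸ hi]
      · simp [hij]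
    · intro k _ hk
      rw [if_neg (fun h => hk (Fin.ext h.symm)), zero_mul]
    · simp
  · rw [Finset.sum_eq_zero fun k _ => by rw [if_neg (by omega), zero_mul]]
    simp [hi]

theorem mul_mul_eq_of_eq_unitary_mul_rectDiagonal_mul {A : Matrix (Fin r) (Fin s) ℂ}
    {B : Matrix (Fin s) (Fin t) ℂ} {U₁ : Matrix (Fin r) (Fin r) ℂ}
    {V₁ U₂ : Matrix (Fin s) (Fin s) ℂ} {V₂ : Matrix (Fin t) (Fin t) ℂ} {a b : ℕ → ℝ}
    (hV₁ : V₁ᴴ * V₁ = 1) (hU₂ : U₂ᴴ * U₂ = 1)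
    (hA : A = U₁ * rectDiagonal r s a * V₁ᴴ) (hB : B = U₂ * rectDiagonal s t b * V₂ᴴ)
    (hb : ∀ k, s ≤ k → b k = 0) :
    A * (V₁ * U₂ᴴ) * B = U₁ * rectDiagonal r t (a * b) * V₂ᴴ := by
  subst hA hB
  simp only [Matrix.mul_assoc]
  rw [← Matrix.mul_assoc V₁ᴴ, hV₁, Matrix.one_mul, ← Matrix.mul_assoc U₂ᴴ, hU₂, Matrix.one_mul,
    ← Matrix.mul_assoc (rectDiagonal r s a), rectDiagonal_mul_rectDiagonal]
  congr 3
  funext k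
  split_ifs with hk
  · rfl
  · simp [hb k (by omega)]

end rectDiagonal

section singVal

variable {r c : ℕ}

theorem singVal_nonneg (A : Matrix (Fin r) (Fin c) ℂ) (n : ℕ) : 0 ≤ singVal A n :=
  Real.sqrt_nonneg _

open scoped ComplexOrder in
theorem singVal_succ_antitone (A : Matrix (Fin r) (Fin c) ℂ) :
    Antitone fun n => singVal A (n + 1) := fun _ _ h =>
  Real.sqrt_le_sqrt <|
    nthLargest_succ_antitone (posSemidef_self_mul_conjTranspose A).eigenvalues_nonneg h

theorem singVal_succ_of_eq_unitary_mul_rectDiagonal_mul {A : Matrix (Fin r) (Fin c) ℂ}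
    {U : Matrix (Fin r) (Fin r) ℂ} {V : Matrix (Fin c) (Fin c) ℂ} {d : ℕ → ℝ}
    (hU : Uᴴ * U = 1) (hV : Vᴴ * V = 1) (hd : Antitone d) (hd₀ : ∀ k, 0 ≤ d k)
    (hA : A = U * rectDiagonal r c d * Vᴴ) (n : ℕ) :
    singVal A (n + 1) = if n < r ∧ n < c then d n else 0 := by
  set e : ℕ → ℝ := fun k => if k < c then d k * d k else 0
  have he : Antitone e :=
    (hd.mul_of_nonneg hd hd₀ hd₀).ite_lt_of_nonneg (fun k => mul_self_nonneg (d k)) c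
  have hAA : A * Aᴴ = U * diagonal (fun i : Fin r => (e i : ℂ)) * Uᴴ := by
    rw [hA, conjTranspose_mul, conjTranspose_mul, conjTranspose_conjTranspose,
      conjTranspose_rectDiagonal, Matrix.mul_assoc (U * _), ← Matrix.mul_assoc Vᴴ,
      hV, Matrix.one_mul, Matrix.mul_assoc U,
      ← Matrix.mul_assoc (rectDiagonal r c d), rectDiagonal_mul_rectDiagonal,
      rectDiagonal_eq_diagonal, Matrix.mul_assoc]
  have heig := (isHermitian_mul_conjTranspose_self A).map_eigenvalues_eq_of_eq_conj_diagonal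
    (e := fun i : Fin r => e i) hU hAA
  rw [singVal, nthLargest_congr heig]
  rcases lt_or_ge n r with hnr | hnr
  · rw [nthLargest_succ_of_antitone (fun _ _ h => he h) hnr]
    by_cases hnc : n < c
    · simp [e, hnc, hnr, Real.sqrt_mul_self (hd₀ n)]
    · simp [e, hnc]
  · rw [nthLargest_eq_zero_of_le hnr, Real.sqrt_zero, if_neg (by omega)]

end singVal

theorem stmt16 {N_R N_S N_T : ℕ}
    (H_B : Matrix (Fin N_R) (Fin N_S) ℂ) (H_F : Matrix (Fin N_S) (Fin N_T) ℂ)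
    -- singular value decompositions `H_B = U_B Σ_B V_Bᴴ` and `H_F = U_F Σ_F V_Fᴴ`,
    -- with the singular values in descending order on the diagonal:
    (U_B : Matrix (Fin N_R) (Fin N_R) ℂ) (V_B : Matrix (Fin N_S) (Fin N_S) ℂ)
    (U_F : Matrix (Fin N_S) (Fin N_S) ℂ) (V_F : Matrix (Fin N_T) (Fin N_T) ℂ)
    (hUB : U_Bᴴ * U_B = 1) (hVB : V_Bᴴ * V_B = 1)
    (hUF : U_Fᴴ * U_F = 1) (hVF : V_Fᴴ * V_F = 1)
    (hB : H_B = U_B * (Matrix.of fun (i : Fin N_R) (j : Fin N_S) =>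
      if (i : ℕ) = (j : ℕ) then ((singVal H_B ((i : ℕ) + 1) : ℝ) : ℂ) else 0) * V_Bᴴ)
    (hF : H_F = U_F * (Matrix.of fun (i : Fin N_S) (j : Fin N_T) =>
      if (i : ℕ) = (j : ℕ) then ((singVal H_F ((i : ℕ) + 1) : ℝ) : ℂ) else 0) * V_Fᴴ) :
    ∀ n : ℕ, 1 ≤ n →
      singVal (H_B * (V_B * U_Fᴴ) * H_F) n = singVal H_B n * singVal H_F n := by
  set σB : ℕ → ℝ := fun k => singVal H_B (k + 1)
  set σF : ℕ → ℝ := fun k => singVal H_F (k + 1)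
  have hσB₀ : ∀ k, 0 ≤ σB k := fun k => singVal_nonneg H_B (k + 1)
  have hσF₀ : ∀ k, 0 ≤ σF k := fun k => singVal_nonneg H_F (k + 1)
  have hB' : H_B = U_B * rectDiagonal N_R N_S σB * V_Bᴴ := hB
  have hF' : H_F = U_F * rectDiagonal N_S N_T σF * V_Fᴴ := hF
  have hσB_zero : ∀ k, ¬(k < N_R ∧ k < N_S) → σB k = 0 := fun k hk =>
    (singVal_succ_of_eq_unitary_mul_rectDiagonal_mul hUB hVB (singVal_succ_antitone H_B) hσB₀
      hB' k).trans (if_neg hk)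
  have hσF_zero : ∀ k, ¬(k < N_S ∧ k < N_T) → σF k = 0 := fun k hk =>
    (singVal_succ_of_eq_unitary_mul_rectDiagonal_mul hUF hVF (singVal_succ_antitone H_F) hσF₀
      hF' k).trans (if_neg hk)
  have hΘ : H_B * (V_B * U_Fᴴ) * H_F = U_B * rectDiagonal N_R N_T (σB * σF) * V_Fᴴ :=
    mul_mul_eq_of_eq_unitary_mul_rectDiagonal_mul hVB hUF hB' hF' fun k hk =>
      hσF_zero k (by omega)
  intro n hn
  obtain ⟨n, rfl⟩ : ∃ k, n = k + 1 := ⟨n - 1, by omega⟩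
  rw [singVal_succ_of_eq_unitary_mul_rectDiagonal_mul hUB hVF
    ((singVal_succ_antitone H_B).mul_of_nonneg (singVal_succ_antitone H_F) hσB₀ hσF₀)
    (fun k => mul_nonneg (hσB₀ k) (hσF₀ k)) hΘ n]
  split_ifs with h
  · rfl
  · rcases not_and_or.mp h with h | h
    · exact (mul_eq_zero_of_left (hσB_zero n (by omega)) _).symm
    · exact (mul_eq_zero_of_right _ (hσF_zero n (by omega))).symm
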